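/- Let T be a tree of order n ≥ 3 with ℓ leaves and w NT vertices. Then gp(μ(T)) ≤ n + ℓ − w. -/
import Mathlib


open SimpleGraph

variable {V : Type*}

/-- The Mycielskian of a graph `G`: vertices are `some (Sum.inl v)` (original vertices),
`some (Sum.inr v)` (twin vertices), and `none` (the root `u*`). -/
def Mycielskian (G : SimpleGraph V) : SimpleGraph (Option (V ⊕ V)) :=
  SimpleGraph.fromRel (fun x y =>
    (∃ u v, G.Adj u v ∧ x = some (Sum.inl u) ∧ y = some (Sum.inl v)) ∨
    (∃ u v, G.Adj u v ∧ x = some (Sum.inl u) ∧ y = some (Sum.inr v)) ∨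
    (∃ u, x = some (Sum.inr u) ∧ y = none))

/-- `S` is a general position set: no shortest path between two vertices of `S`
contains a third element of `S`. -/
def IsGPSet (G : SimpleGraph V) (S : Set V) : Prop :=
  ∀ u ∈ S, ∀ v ∈ S, ∀ p : G.Walk u v, p.length = G.dist u v →
    ∀ w ∈ S, w ∈ p.support → w = u ∨ w = v

/-- The general position number of `G`: the maximum cardinality of a general position set. -/
noncomputable def gpNumber (G : SimpleGraph V) [Fintype V] : ℕ :=
  sSup {k | ∃ S : Set V, IsGPSet G S ∧ S.ncard = k}

/-- A gp-set: a general position set of maximum cardinality. -/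
def IsGpSet (G : SimpleGraph V) [Fintype V] (S : Set V) : Prop :=
  IsGPSet G S ∧ S.ncard = gpNumber G

/-- A leaf of a graph: a vertex of degree one. -/
def IsLeafVert (G : SimpleGraph V) (v : V) : Prop :=
  (G.neighborSet v).ncard = 1

/-- A next-to-terminal (NT) vertex: a vertex adjacent to a leaf. -/
def IsNTVert (G : SimpleGraph V) (v : V) : Prop :=
  ∃ u, G.Adj v u ∧ IsLeafVert G u

namespace MycielskianAux

notation "ô" v => (some (Sum.inl v) : Option (_ ⊕ _))
notation "t̂" v => (some (Sum.inr v) : Option (_ ⊕ _))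

variable {G : SimpleGraph V} {u v : V}

@[simp] lemma adj_oo : (Mycielskian G).Adj (ô u) (ô v) ↔ G.Adj u v := by
  constructor
  · rintro ⟨hne, h | h⟩ <;> rcases h with ⟨a,b,hab,h1,h2⟩ | ⟨a,b,hab,h1,h2⟩ | ⟨a,h1,h2⟩ <;>
      simp_all <;> subst_vars <;> simp_all [G.adj_comm]
  · intro h
    exact ⟨by simp [h.ne], Or.inl (Or.inl ⟨u, v, h, rfl, rfl⟩)⟩

@[simp] lemma adj_ot : (Mycielskian G).Adj (ô u) (t̂ v) ↔ G.Adj u v := by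
  constructor
  · rintro ⟨hne, h | h⟩ <;> rcases h with ⟨a,b,hab,h1,h2⟩ | ⟨a,b,hab,h1,h2⟩ | ⟨a,h1,h2⟩ <;>
      simp_all <;> subst_vars <;> simp_all [G.adj_comm]
  · intro h
    exact ⟨by simp, Or.inl (Or.inr (Or.inl ⟨u, v, h, rfl, rfl⟩))⟩

@[simp] lemma adj_to : (Mycielskian G).Adj (t̂ u) (ô v) ↔ G.Adj u v := by
  rw [(Mycielskian G).adj_comm, adj_ot, G.adj_comm]

@[simp] lemma adj_tt : ¬ (Mycielskian G).Adj (t̂ u) (t̂ v) := by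
  rintro ⟨hne, h | h⟩ <;> rcases h with ⟨a,b,hab,h1,h2⟩ | ⟨a,b,hab,h1,h2⟩ | ⟨a,h1,h2⟩ <;> simp_all

@[simp] lemma adj_tz : (Mycielskian G).Adj (t̂ u) none := by
  exact ⟨by simp, Or.inl (Or.inr (Or.inr ⟨u, rfl, rfl⟩))⟩

@[simp] lemma adj_zt : (Mycielskian G).Adj none (t̂ u) := (adj_tz).symm

@[simp] lemma adj_oz : ¬ (Mycielskian G).Adj (ô u) none := by
  rintro ⟨hne, h | h⟩ <;> rcases h with ⟨a,b,hab,h1,h2⟩ | ⟨a,b,hab,h1,h2⟩ | ⟨a,h1,h2⟩ <;> simp_all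

@[simp] lemma adj_zo : ¬ (Mycielskian G).Adj none (ô u) := fun h => adj_oz h.symm

end MycielskianAux

section Aux1
open SimpleGraph

variable {V : Type*} {G : SimpleGraph V} {u v : V}

lemma walk_len1 (p : G.Walk u v) (h : p.length = 1) : G.Adj u v := by
  cases p with
  | nil => simp at h
  | cons h1 q =>
    cases q with
    | nil => exact h1
    | cons h2 r => simp [SimpleGraph.Walk.length_cons] at h

lemma walk_len2 (p : G.Walk u v) (h : p.length = 2) :
    ∃ x, G.Adj u x ∧ G.Adj x v := by
  cases p with
  | nil => simp at h
  | cons h1 q =>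
    refine ⟨_, h1, walk_len1 q ?_⟩
    simpa using h

lemma walk_len3 (p : G.Walk u v) (h : p.length = 3) :
    ∃ x y, G.Adj u x ∧ G.Adj x y ∧ G.Adj y v := by
  cases p with
  | nil => simp at h
  | cons h1 q =>
    obtain ⟨y, hy1, hy2⟩ := walk_len2 q (by simpa using h)
    exact ⟨_, y, h1, hy1, hy2⟩

lemma dist_eq_two (hne : u ≠ v) (hadj : ¬ G.Adj u v) (p : G.Walk u v)
    (hp : p.length = 2) : G.dist u v = 2 := by
  have h2 : G.dist u v ≤ 2 := hp ▸ SimpleGraph.dist_le p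
  have h0 : G.dist u v ≠ 0 := by
    rw [SimpleGraph.dist_ne_zero_iff_ne_and_reachable]
    exact ⟨hne, ⟨p⟩⟩
  have h1 : G.dist u v ≠ 1 := by
    rw [Ne, SimpleGraph.dist_eq_one_iff_adj]; exact hadj
  omega

lemma dist_eq_three (hne : u ≠ v) (hadj : ¬ G.Adj u v)
    (hcn : ∀ x, ¬ (G.Adj u x ∧ G.Adj x v)) (p : G.Walk u v)
    (hp : p.length = 3) : G.dist u v = 3 := by
  have h3 : G.dist u v ≤ 3 := hp ▸ SimpleGraph.dist_le p
  have h0 : G.dist u v ≠ 0 := by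
    rw [SimpleGraph.dist_ne_zero_iff_ne_and_reachable]
    exact ⟨hne, ⟨p⟩⟩
  have h1 : G.dist u v ≠ 1 := by
    rw [Ne, SimpleGraph.dist_eq_one_iff_adj]; exact hadj
  have h2 : G.dist u v ≠ 2 := by
    intro h
    obtain ⟨q, hq⟩ := SimpleGraph.exists_walk_of_dist_ne_zero h0
    obtain ⟨x, hx1, hx2⟩ := walk_len2 q (by omega)
    exact hcn x ⟨hx1, hx2⟩
  omega

lemma dist_eq_four (hne : u ≠ v) (hadj : ¬ G.Adj u v)
    (hcn : ∀ x, ¬ (G.Adj u x ∧ G.Adj x v))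
    (hc3 : ∀ x y, ¬ (G.Adj u x ∧ G.Adj x y ∧ G.Adj y v)) (p : G.Walk u v)
    (hp : p.length = 4) : G.dist u v = 4 := by
  have h4 : G.dist u v ≤ 4 := hp ▸ SimpleGraph.dist_le p
  have h0 : G.dist u v ≠ 0 := by
    rw [SimpleGraph.dist_ne_zero_iff_ne_and_reachable]
    exact ⟨hne, ⟨p⟩⟩
  have h1 : G.dist u v ≠ 1 := by
    rw [Ne, SimpleGraph.dist_eq_one_iff_adj]; exact hadj
  have h2 : G.dist u v ≠ 2 := by
    intro h
    obtain ⟨q, hq⟩ := SimpleGraph.exists_walk_of_dist_ne_zero h0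
    obtain ⟨x, hx1, hx2⟩ := walk_len2 q (by omega)
    exact hcn x ⟨hx1, hx2⟩
  have h3 : G.dist u v ≠ 3 := by
    intro h
    obtain ⟨q, hq⟩ := SimpleGraph.exists_walk_of_dist_ne_zero h0
    obtain ⟨x, y, h1', h2', h3'⟩ := walk_len3 q (by omega)
    exact hc3 x y ⟨h1', h2', h3'⟩
  omega

-- distance lower bounds from T-distance
lemma dist_le_of_chain2 {x : V} (h1 : G.Adj u x) (h2 : G.Adj x v) : G.dist u v ≤ 2 := by
  have := SimpleGraph.dist_le (.cons h1 (.cons h2 .nil) : G.Walk u v)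
  simpa using this

lemma dist_le_of_chain3 {x y : V} (h1 : G.Adj u x) (h2 : G.Adj x y) (h3 : G.Adj y v) :
    G.dist u v ≤ 3 := by
  have := SimpleGraph.dist_le (.cons h1 (.cons h2 (.cons h3 .nil)) : G.Walk u v)
  simpa using this

variable {V : Type*} {G : SimpleGraph V} {u v m m1 m2 : V}

lemma tree_path_length (hT : G.IsTree) (p : G.Walk u v) (hp : p.IsPath) :
    p.length = G.dist u v := by
  obtain ⟨q, hq, hql⟩ := SimpleGraph.Reachable.exists_path_of_dist ⟨p⟩
  obtain ⟨r, -, hr⟩ := hT.existsUnique_path u v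
  rw [hr p hp, ← hr q hq, hql]

lemma tree_triangle_free (hT : G.IsTree) (h1 : G.Adj u v) (h2 : G.Adj u m)
    (h3 : G.Adj m v) : False := by
  have e1 := tree_path_length hT (.cons h1 .nil)
    (by rw [SimpleGraph.Walk.isPath_def]; simp [h1.ne])
  have e2 := tree_path_length hT (.cons h2 (.cons h3 .nil))
    (by rw [SimpleGraph.Walk.isPath_def]; simp [h1.ne, h2.ne, h3.ne])
  simp only [SimpleGraph.Walk.length_cons, SimpleGraph.Walk.length_nil] at e1 e2
  omega

lemma tree_square_free (hT : G.IsTree) (hne : u ≠ v) (hm : m1 ≠ m2)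
    (h1 : G.Adj u m1) (h2 : G.Adj m1 v) (h3 : G.Adj u m2) (h4 : G.Adj m2 v) :
    False := by
  obtain ⟨r, -, hr⟩ := hT.existsUnique_path u v
  have hp1 : (SimpleGraph.Walk.cons h1 (SimpleGraph.Walk.cons h2 SimpleGraph.Walk.nil)).IsPath := by
    rw [SimpleGraph.Walk.isPath_def]; simp [hne, h1.ne, h2.ne]
  have hp2 : (SimpleGraph.Walk.cons h3 (SimpleGraph.Walk.cons h4 SimpleGraph.Walk.nil)).IsPath := by
    rw [SimpleGraph.Walk.isPath_def]; simp [hne, h3.ne, h4.ne]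
  have e1 := hr _ hp1
  have e2 := hr _ hp2
  have : (SimpleGraph.Walk.cons h1 (.cons h2 .nil)).support
      = (SimpleGraph.Walk.cons h3 (.cons h4 .nil)).support := by rw [e1, ← e2]
  simp only [SimpleGraph.Walk.support_cons, SimpleGraph.Walk.support_nil] at this
  exact hm (by injection this with _ h'; injection h')

lemma exists_neighbor [Fintype V] (hc : G.Connected) (h2 : 2 ≤ Fintype.card V) (v : V) :
    ∃ w, G.Adj v w := by
  obtain ⟨u, hu⟩ := Fintype.exists_ne_of_one_lt_card (by omega) v
  obtain ⟨p⟩ := hc v u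
  cases p with
  | nil => exact absurd rfl hu
  | cons h q => exact ⟨_, h⟩

lemma dist2_chain (h : G.dist u v = 2) : ∃ x, G.Adj u x ∧ G.Adj x v := by
  obtain ⟨p, hp⟩ := SimpleGraph.exists_walk_of_dist_ne_zero
    (G := G) (u := u) (v := v) (by omega)
  exact walk_len2 p (by omega)

lemma dist3_chain (h : G.dist u v = 3) : ∃ x y, G.Adj u x ∧ G.Adj x y ∧ G.Adj y v := by
  obtain ⟨p, hp⟩ := SimpleGraph.exists_walk_of_dist_ne_zero
    (G := G) (u := u) (v := v) (by omega)
  exact walk_len3 p (by omega)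

end Aux1

section MycDist
variable {V : Type*} {T : SimpleGraph V} {u v m x y p q r b1 b2 : V}

open MycielskianAux

-- common neighbor enumeration: o-o
lemma mcommon_oo (h : ∃ x, (Mycielskian T).Adj (ô u) x ∧ (Mycielskian T).Adj x (ô v)) :
    ∃ m, T.Adj u m ∧ T.Adj m v := by
  obtain ⟨x, h1, h2⟩ := h
  match x with
  | none => simp at h1
  | some (Sum.inl m) => exact ⟨m, by simpa using h1, by simpa using h2⟩
  | some (Sum.inr m) => exact ⟨m, by simpa using h1, by simpa using h2⟩

lemma mcommon_ot (h : ∃ x, (Mycielskian T).Adj (ô u) x ∧ (Mycielskian T).Adj x (t̂ v)) :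
    ∃ m, T.Adj u m ∧ T.Adj m v := by
  obtain ⟨x, h1, h2⟩ := h
  match x with
  | none => simp at h1
  | some (Sum.inl m) => exact ⟨m, by simpa using h1, by simpa using h2⟩
  | some (Sum.inr m) => simp at h2

lemma mchain3_oo {xx yy : Option (V ⊕ V)} (hx : (Mycielskian T).Adj (ô u) xx)
    (hxy : (Mycielskian T).Adj xx yy)
    (hy : (Mycielskian T).Adj yy (ô v)) : ∃ a b, T.Adj u a ∧ T.Adj a b ∧ T.Adj b v := by
  match xx, yy with
  | none, _ => simp at hx
  | _, none => simp at hy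
  | some (Sum.inl a), some (Sum.inl b) =>
    exact ⟨a, b, by simpa using hx, by simpa using hxy, by simpa using hy⟩
  | some (Sum.inl a), some (Sum.inr b) =>
    exact ⟨a, b, by simpa using hx, by simpa using hxy, by simpa using hy⟩
  | some (Sum.inr a), some (Sum.inl b) =>
    exact ⟨a, b, by simpa using hx, by simpa using hxy, by simpa using hy⟩
  | some (Sum.inr a), some (Sum.inr b) => simp at hxy

-- (a) dist between two distinct twins = 2
lemma mdist_tt (h : b1 ≠ b2) : (Mycielskian T).dist (t̂ b1) (t̂ b2) = 2 := by
  apply dist_eq_two (by simp [h]) (by simp)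
    (.cons (adj_tz) (.cons (adj_zt) .nil)) (by simp)

-- (b) dist (ô u) (t̂ u) = 2
lemma mdist_ott (hm : T.Adj u m) : (Mycielskian T).dist (ô u) (t̂ u) = 2 := by
  apply dist_eq_two (by simp) (by simp)
    (.cons (adj_oo.mpr hm) (.cons (adj_ot.mpr hm.symm) .nil)) (by simp)

-- (c) dist (ô u) (ô v) = 2
lemma mdist_oo2 (hne : u ≠ v) (hnadj : ¬ T.Adj u v) (h1 : T.Adj u m) (h2 : T.Adj m v) :
    (Mycielskian T).dist (ô u) (ô v) = 2 := by
  apply dist_eq_two (by simp [hne]) (by simp [hnadj])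
    (.cons (adj_oo.mpr h1) (.cons (adj_oo.mpr h2) .nil)) (by simp)

-- (d) dist (ô u) (t̂ v) = 2
lemma mdist_ot2 (hne : u ≠ v) (hnadj : ¬ T.Adj u v) (h1 : T.Adj u m) (h2 : T.Adj m v) :
    (Mycielskian T).dist (ô u) (t̂ v) = 2 := by
  apply dist_eq_two (by simp) (by simp [hnadj])
    (.cons (adj_oo.mpr h1) (.cons (adj_ot.mpr h2) .nil)) (by simp)

-- (i) dist (ô u) none = 2
lemma mdist_oz (hm : T.Adj u m) : (Mycielskian T).dist (ô u) none = 2 := by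
  apply dist_eq_two (by simp) (by simp)
    (.cons (adj_ot.mpr hm) (.cons (adj_tz) .nil)) (by simp)

-- (e) dist (ô u) (ô v) = 3 when T.dist u v = 3
lemma mdist_oo3 (hd : T.dist u v = 3) (h1 : T.Adj u p) (h2 : T.Adj p q) (h3 : T.Adj q v) :
    (Mycielskian T).dist (ô u) (ô v) = 3 := by
  apply dist_eq_three (by simp; rintro rfl; simp [SimpleGraph.dist_self] at hd)
    (by simp; intro h; rw [← SimpleGraph.dist_eq_one_iff_adj] at h; omega)
    (fun c hc => by
      have := mcommon_oo ⟨c, hc⟩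
      obtain ⟨m, hm1, hm2⟩ := this
      have := dist_le_of_chain2 hm1 hm2
      omega)
    (.cons (adj_oo.mpr h1) (.cons (adj_oo.mpr h2) (.cons (adj_oo.mpr h3) .nil))) (by simp)

-- (f) dist (ô u) (t̂ v) = 3 when T.dist u v ≥ 3, walk via root
lemma mdist_ot3 (hd : 3 ≤ T.dist u v) (hm : T.Adj u m) :
    (Mycielskian T).dist (ô u) (t̂ v) = 3 := by
  apply dist_eq_three (by simp)
    (by simp; intro h; rw [← SimpleGraph.dist_eq_one_iff_adj] at h; omega)
    (fun c hc => by
      have := mcommon_ot ⟨c, hc⟩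
      obtain ⟨m', hm1, hm2⟩ := this
      have := dist_le_of_chain2 hm1 hm2
      omega)
    (.cons (adj_ot.mpr hm) (.cons (adj_tz) (.cons (adj_zt) .nil))) (by simp)

-- (g) dist (ô u) (ô v) = 4 when T.dist u v = 4, all-original walk
lemma mdist_oo4 (hd : T.dist u v = 4) (h1 : T.Adj u p) (h2 : T.Adj p q) (h3 : T.Adj q r)
    (h4 : T.Adj r v) : (Mycielskian T).dist (ô u) (ô v) = 4 := by
  apply dist_eq_four (by simp; rintro rfl; simp [SimpleGraph.dist_self] at hd)
    (by simp; intro h; rw [← SimpleGraph.dist_eq_one_iff_adj] at h; omega)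
    (fun c hc => by
      obtain ⟨m, hm1, hm2⟩ := mcommon_oo ⟨c, hc⟩
      have := dist_le_of_chain2 hm1 hm2
      omega)
    (fun c d hcd => by
      obtain ⟨a, b, ha, hab, hb⟩ := mchain3_oo hcd.1 hcd.2.1 hcd.2.2
      have := dist_le_of_chain3 ha hab hb
      omega)
    (.cons (adj_oo.mpr h1) (.cons (adj_oo.mpr h2)
      (.cons (adj_oo.mpr h3) (.cons (adj_oo.mpr h4) .nil)))) (by simp)

-- (h) dist (ô u) (ô v) = 4 when T.dist u v ≥ 4, walk via root
lemma mdist_oo4' (hd : 4 ≤ T.dist u v) (hm : T.Adj u m) (hx : T.Adj v x) :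
    (Mycielskian T).dist (ô u) (ô v) = 4 := by
  apply dist_eq_four (by simp; rintro rfl; simp [SimpleGraph.dist_self] at hd)
    (by simp; intro h; rw [← SimpleGraph.dist_eq_one_iff_adj] at h; omega)
    (fun c hc => by
      obtain ⟨m', hm1, hm2⟩ := mcommon_oo ⟨c, hc⟩
      have := dist_le_of_chain2 hm1 hm2
      omega)
    (fun c d hcd => by
      obtain ⟨a, b, ha, hab, hb⟩ := mchain3_oo hcd.1 hcd.2.1 hcd.2.2
      have := dist_le_of_chain3 ha hab hb
      omega)
    (.cons (adj_ot.mpr hm) (.cons (adj_tz)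
      (.cons (adj_zt) (.cons (adj_to.mpr hx.symm) .nil)))) (by simp)

end MycDist

section GPC
open MycielskianAux
variable {V : Type*} {T : SimpleGraph V} {S : Set (Option (V ⊕ V))}
variable {u v m p q r x y s a b1 b2 : V}

-- C2a: two A-vertices with common neighbor m, m ∈ A : contradiction
lemma gpC2a (hT : T.IsTree) (hS : IsGPSet (Mycielskian T) S) (hne : u ≠ v)
    (hu : (ô u) ∈ S) (hv : (ô v) ∈ S) (hm : (ô m) ∈ S)
    (h1 : T.Adj u m) (h2 : T.Adj m v) : False := by
  have hnadj : ¬ T.Adj u v := fun h => tree_triangle_free hT h h1 h2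
  have hd := mdist_oo2 hne hnadj h1 h2
  have := hS _ hu _ hv (.cons (adj_oo.mpr h1) (.cons (adj_oo.mpr h2) .nil))
    (by simpa using hd.symm) _ hm (by simp)
  simp only [Option.some.injEq, Sum.inl.injEq] at this
  rcases this with rfl | rfl
  · exact h1.ne rfl
  · exact h2.ne rfl

-- C2b: two A-vertices with common neighbor m, m ∈ B : contradiction
lemma gpC2b (hT : T.IsTree) (hS : IsGPSet (Mycielskian T) S) (hne : u ≠ v)
    (hu : (ô u) ∈ S) (hv : (ô v) ∈ S) (hm : (t̂ m) ∈ S)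
    (h1 : T.Adj u m) (h2 : T.Adj m v) : False := by
  have hnadj : ¬ T.Adj u v := fun h => tree_triangle_free hT h h1 h2
  have hd := mdist_oo2 hne hnadj h1 h2
  have := hS _ hu _ hv (.cons (adj_ot.mpr h1) (.cons (adj_to.mpr h2) .nil))
    (by simpa using hd.symm) _ hm (by simp)
  simp at this

-- C3/C9: u ∈ A, v ∈ B, common neighbor m ∈ A : contradiction
lemma gpC3 (hT : T.IsTree) (hS : IsGPSet (Mycielskian T) S) (hne : u ≠ v)
    (hu : (ô u) ∈ S) (hv : (t̂ v) ∈ S) (hm : (ô m) ∈ S)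
    (h1 : T.Adj u m) (h2 : T.Adj m v) : False := by
  have hnadj : ¬ T.Adj u v := fun h => tree_triangle_free hT h h1 h2
  have hd := mdist_ot2 hne hnadj h1 h2
  have := hS _ hu _ hv (.cons (adj_oo.mpr h1) (.cons (adj_ot.mpr h2) .nil))
    (by simpa using hd.symm) _ hm (by simp)
  simp only [Option.some.injEq, Sum.inl.injEq, reduceCtorEq, or_false] at this
  exact h1.ne this.symm

-- C4: u ∈ A ∩ B, m a neighbor of u with m ∈ A : contradiction
lemma gpC4 (hS : IsGPSet (Mycielskian T) S)
    (hu : (ô u) ∈ S) (hu' : (t̂ u) ∈ S) (hm : (ô m) ∈ S) (h1 : T.Adj u m) : False := by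
  have hd := mdist_ott h1
  have := hS _ hu _ hu' (.cons (adj_oo.mpr h1) (.cons (adj_ot.mpr h1.symm) .nil))
    (by simpa using hd.symm) _ hm (by simp)
  simp only [Option.some.injEq, Sum.inl.injEq, reduceCtorEq, or_false] at this
  exact h1.ne this.symm

-- C1: a ∈ A adjacent to two distinct B-vertices : contradiction
lemma gpC1 (hS : IsGPSet (Mycielskian T) S) (hne : b1 ≠ b2)
    (ha : (ô a) ∈ S) (hb1 : (t̂ b1) ∈ S) (hb2 : (t̂ b2) ∈ S)
    (h1 : T.Adj a b1) (h2 : T.Adj a b2) : False := by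
  have hd := mdist_tt (T := T) hne
  have := hS _ hb1 _ hb2 (.cons (adj_to.mpr h1.symm) (.cons (adj_ot.mpr h2) .nil))
    (by simpa using hd.symm) _ ha (by simp)
  simp at this

-- Z1: root ∈ S plus two distinct B-vertices : contradiction
lemma gpZ1 (hS : IsGPSet (Mycielskian T) S) (hne : b1 ≠ b2) (hz : none ∈ S)
    (hb1 : (t̂ b1) ∈ S) (hb2 : (t̂ b2) ∈ S) : False := by
  have hd := mdist_tt (T := T) hne
  have := hS _ hb1 _ hb2 (.cons (adj_tz) (.cons (adj_zt) .nil))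
    (by simpa using hd.symm) _ hz (by simp)
  simp at this

-- Z2: root ∈ S, u ∈ A, m neighbor of u with m ∈ B : contradiction
lemma gpZ2 (hS : IsGPSet (Mycielskian T) S) (hz : none ∈ S)
    (hu : (ô u) ∈ S) (hm : (t̂ m) ∈ S) (h1 : T.Adj u m) : False := by
  have hd := mdist_oz h1
  have := hS _ hu _ hz (.cons (adj_ot.mpr h1) (.cons (adj_tz) .nil))
    (by simpa using hd.symm) _ hm (by simp)
  simp at this

-- Z3: root ∈ S, u v ∈ A with T.dist u v ≥ 4 : contradiction
lemma gpZ3 (hS : IsGPSet (Mycielskian T) S) (hz : none ∈ S)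
    (hu : (ô u) ∈ S) (hv : (ô v) ∈ S) (hd : 4 ≤ T.dist u v)
    (hm : T.Adj u m) (hx : T.Adj v x) : False := by
  have hd' := mdist_oo4' hd hm hx
  have := hS _ hu _ hv (.cons (adj_ot.mpr hm) (.cons (adj_tz)
      (.cons (adj_zt) (.cons (adj_to.mpr hx.symm) .nil))))
    (by simpa using hd'.symm) _ hz (by simp)
  simp at this

-- C5: u ∈ A, v ∈ B with T.dist u v ≥ 3, m neighbor of u, m ∈ B : contradiction
lemma gpC5 (hS : IsGPSet (Mycielskian T) S)
    (hu : (ô u) ∈ S) (hv : (t̂ v) ∈ S) (hd : 3 ≤ T.dist u v)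
    (h1 : T.Adj u m) (hm : (t̂ m) ∈ S) : False := by
  have hd' := mdist_ot3 hd h1
  have := hS _ hu _ hv (.cons (adj_ot.mpr h1) (.cons (adj_tz) (.cons (adj_zt) .nil)))
    (by simpa using hd'.symm) _ hm (by simp)
  simp only [Option.some.injEq, Sum.inr.injEq, reduceCtorEq, false_or] at this
  subst this
  have := SimpleGraph.dist_eq_one_iff_adj.mpr h1
  omega

-- C6: u, v ∈ A with T.dist u v ≥ 4, m neighbor of u, m ∈ B : contradiction
lemma gpC6 (hS : IsGPSet (Mycielskian T) S)
    (hu : (ô u) ∈ S) (hv : (ô v) ∈ S) (hd : 4 ≤ T.dist u v)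
    (h1 : T.Adj u m) (hm : (t̂ m) ∈ S) (hx : T.Adj v x) : False := by
  have hd' := mdist_oo4' hd h1 hx
  have := hS _ hu _ hv (.cons (adj_ot.mpr h1) (.cons (adj_tz)
      (.cons (adj_zt) (.cons (adj_to.mpr hx.symm) .nil))))
    (by simpa using hd'.symm) _ hm (by simp)
  simp at this

-- C7a : u,v ∈ A, T.dist u v = 3, chain u~p~q~v, p or q in A : contradiction
lemma gpC7a (hS : IsGPSet (Mycielskian T) S)
    (hu : (ô u) ∈ S) (hv : (ô v) ∈ S) (hd : T.dist u v = 3)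
    (h1 : T.Adj u p) (h2 : T.Adj p q) (h3 : T.Adj q v)
    (hpq : (ô p) ∈ S ∨ (ô q) ∈ S) : False := by
  have hd' := mdist_oo3 hd h1 h2 h3
  rcases hpq with hp | hq
  · have := hS _ hu _ hv (.cons (adj_oo.mpr h1) (.cons (adj_oo.mpr h2)
        (.cons (adj_oo.mpr h3) .nil)))
      (by simpa using hd'.symm) _ hp (by simp)
    simp only [Option.some.injEq, Sum.inl.injEq] at this
    rcases this with rfl | rfl
    · exact h1.ne rfl
    · have := SimpleGraph.dist_eq_one_iff_adj.mpr h1; omega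
  · have := hS _ hu _ hv (.cons (adj_oo.mpr h1) (.cons (adj_oo.mpr h2)
        (.cons (adj_oo.mpr h3) .nil)))
      (by simpa using hd'.symm) _ hq (by simp)
    simp only [Option.some.injEq, Sum.inl.injEq] at this
    rcases this with rfl | rfl
    · rw [SimpleGraph.dist_eq_one_iff_adj.mpr h3] at hd; omega
    · exact h3.ne rfl

-- C7b : u,v ∈ A, T.dist u v = 3, chain u~p~q~v, p ∈ B : contradiction
lemma gpC7b (hS : IsGPSet (Mycielskian T) S)
    (hu : (ô u) ∈ S) (hv : (ô v) ∈ S) (hd : T.dist u v = 3)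
    (h1 : T.Adj u p) (h2 : T.Adj p q) (h3 : T.Adj q v)
    (hp : (t̂ p) ∈ S) : False := by
  have hd' := mdist_oo3 hd h1 h2 h3
  have := hS _ hu _ hv (.cons (adj_ot.mpr h1) (.cons (adj_to.mpr h2)
      (.cons (adj_oo.mpr h3) .nil)))
    (by simpa using hd'.symm) _ hp (by simp)
  simp at this

-- C10 : u ∈ A, v ∈ B, T.dist u v = 3, chain u~p~q~v, p or q ∈ A : contradiction
lemma gpC10 (hS : IsGPSet (Mycielskian T) S)
    (hu : (ô u) ∈ S) (hv : (t̂ v) ∈ S) (hd : T.dist u v = 3)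
    (h1 : T.Adj u p) (h2 : T.Adj p q) (h3 : T.Adj q v)
    (hpq : (ô p) ∈ S ∨ (ô q) ∈ S) : False := by
  have hd' := mdist_ot3 (le_of_eq hd.symm) h1
  rcases hpq with hp | hq
  · have := hS _ hu _ hv (.cons (adj_oo.mpr h1) (.cons (adj_oo.mpr h2)
        (.cons (adj_ot.mpr h3) .nil)))
      (by simpa using hd'.symm) _ hp (by simp)
    simp only [Option.some.injEq, Sum.inl.injEq, reduceCtorEq, or_false] at this
    subst this
    exact h1.ne rfl
  · have := hS _ hu _ hv (.cons (adj_oo.mpr h1) (.cons (adj_oo.mpr h2)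
        (.cons (adj_ot.mpr h3) .nil)))
      (by simpa using hd'.symm) _ hq (by simp)
    simp only [Option.some.injEq, Sum.inl.injEq, reduceCtorEq, or_false] at this
    subst this
    rw [SimpleGraph.dist_eq_one_iff_adj.mpr h3] at hd; omega

-- C8 : u,v ∈ A, T.dist u v = 4, chain u~p~q~r~v, q ∈ A : contradiction
lemma gpC8 (hS : IsGPSet (Mycielskian T) S)
    (hu : (ô u) ∈ S) (hv : (ô v) ∈ S) (hd : T.dist u v = 4)
    (h1 : T.Adj u p) (h2 : T.Adj p q) (h3 : T.Adj q r) (h4 : T.Adj r v)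
    (hq : (ô q) ∈ S) : False := by
  have hd' := mdist_oo4 hd h1 h2 h3 h4
  have := hS _ hu _ hv (.cons (adj_oo.mpr h1) (.cons (adj_oo.mpr h2)
      (.cons (adj_oo.mpr h3) (.cons (adj_oo.mpr h4) .nil))))
    (by simpa using hd'.symm) _ hq (by simp)
  simp only [Option.some.injEq, Sum.inl.injEq] at this
  rcases this with rfl | rfl
  · have := dist_le_of_chain2 h3 h4; omega
  · have := dist_le_of_chain2 h1 h2
    omega

end GPC

section TreeLeaf
variable {V : Type*} [Fintype V] {T : SimpleGraph V} {x y z c s u v : V}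

lemma leaf_eq (hx : IsLeafVert T x) (h1 : T.Adj x y) (h2 : T.Adj x z) : y = z := by
  obtain ⟨a, ha⟩ := Set.ncard_eq_one.mp hx
  have hy : y ∈ T.neighborSet x := h1
  have hz : z ∈ T.neighborSet x := h2
  rw [ha] at hy hz
  simp at hy hz
  rw [hy, hz]

lemma two_nbrs_nonleaf (h1 : T.Adj x y) (h2 : T.Adj x z) (hne : y ≠ z) :
    ¬ IsLeafVert T x := fun h => hne (leaf_eq h h1 h2)

lemma nonleaf_two (hc : T.Connected) (hn : 3 ≤ Fintype.card V)
    (hx : ¬ IsLeafVert T x) : ∃ y z, T.Adj x y ∧ T.Adj x z ∧ y ≠ z := by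
  obtain ⟨y, hy⟩ := exists_neighbor hc (by omega) x
  by_contra h
  push_neg at h
  apply hx
  have : T.neighborSet x = {y} := by
    ext a
    simp only [SimpleGraph.mem_neighborSet, Set.mem_singleton_iff]
    exact ⟨fun ha => h a y ha hy, fun ha => ha ▸ hy⟩
  rw [IsLeafVert, this]
  simp

lemma exists_third (hn : 3 ≤ Fintype.card V) (x y : V) : ∃ c, c ≠ x ∧ c ≠ y := by
  classical
  by_contra h
  push_neg at h
  have hsub : (Finset.univ : Finset V) ⊆ {x, y} := by
    intro c _
    have := h c
    by_cases hc : c = x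
    · simp [hc]
    · simp [this hc]
  have h1 := Finset.card_le_card hsub
  rw [Finset.card_univ] at h1
  have h2 : ({x, y} : Finset V).card ≤ 2 :=
    (Finset.card_insert_le _ _).trans (by simp)
  omega

lemma leaf_not_adj_leaf (hT : T.IsTree) (hn : 3 ≤ Fintype.card V)
    (hx : IsLeafVert T x) (hy : IsLeafVert T y) (h : T.Adj x y) : False := by
  obtain ⟨c, hcx, hcy⟩ := exists_third hn x y
  obtain ⟨p, hp, -⟩ := hT.isConnected.exists_path_of_dist x c
  cases p with
  | nil => exact hcx rfl
  | cons h1 q =>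
    have := leaf_eq hx h1 h
    subst this
    cases q with
    | nil => exact hcy rfl
    | cons h2 r =>
      have := leaf_eq hy h2 h.symm
      subst this
      rw [SimpleGraph.Walk.isPath_def] at hp
      simp only [SimpleGraph.Walk.support_cons, List.nodup_cons] at hp
      exact hp.1 (by simp [r.start_mem_support])

lemma star_counts (hT : T.IsTree) (hn : 3 ≤ Fintype.card V)
    (hc : ∀ v, v ≠ c → T.Adj c v) :
    {v | IsLeafVert T v}.ncard = Fintype.card V - 1 ∧ {v | IsNTVert T v}.ncard = 1 := by
  have hcnl : ¬ IsLeafVert T c := by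
    obtain ⟨a, ha1, ha2⟩ := exists_third hn c c
    obtain ⟨b, hb1, hb2⟩ := exists_third hn c a
    exact two_nbrs_nonleaf (hc a ha1) (hc b hb1) (Ne.symm hb2)
  have hleaf : ∀ v, v ≠ c → IsLeafVert T v := by
    intro v hv
    have : T.neighborSet v = {c} := by
      ext a
      simp only [SimpleGraph.mem_neighborSet, Set.mem_singleton_iff]
      constructor
      · intro ha
        by_contra hne
        exact tree_triangle_free hT ha ((hc v hv).symm) (hc a hne)
      · rintro rfl; exact (hc v hv).symm
    rw [IsLeafVert, this]; simp
  have hL : {v | IsLeafVert T v} = {c}ᶜ := by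
    ext v
    simp only [Set.mem_setOf_eq, Set.mem_compl_iff, Set.mem_singleton_iff]
    constructor
    · intro h hvc; exact hcnl (hvc ▸ h)
    · exact hleaf v
  have hW : {v | IsNTVert T v} = {c} := by
    ext v
    simp only [Set.mem_setOf_eq, Set.mem_singleton_iff]
    constructor
    · rintro ⟨u, hu1, hu2⟩
      by_contra hvc
      have := leaf_eq (hleaf v hvc) hu1 (hc v hvc).symm
      subst this
      exact hcnl hu2
    · rintro rfl
      obtain ⟨a, ha1, -⟩ := exists_third hn v v
      exact ⟨a, hc a ha1, hleaf a ha1⟩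
  constructor
  · rw [hL, Set.compl_eq_univ_diff, Set.ncard_diff (Set.subset_univ _),
      Set.ncard_univ, Nat.card_eq_fintype_card, Set.ncard_singleton]
  · rw [hW]; simp

lemma tree_star_or_path (hT : T.IsTree) (hn : 3 ≤ Fintype.card V) :
    (∃ c, ∀ v, v ≠ c → T.Adj c v) ∨
    ∃ x0 x1 x2 x3 : V, T.Adj x0 x1 ∧ T.Adj x1 x2 ∧ T.Adj x2 x3 ∧ T.dist x0 x3 = 3 := by
  by_cases hP : ∃ a b, T.Adj a b ∧ ¬ IsLeafVert T a ∧ ¬ IsLeafVert T b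
  · obtain ⟨a, b, hab, hla, hlb⟩ := hP
    obtain ⟨y1, y2, hy1, hy2, hyne⟩ := nonleaf_two hT.isConnected hn hla
    obtain ⟨x, hx, hxb⟩ : ∃ x, T.Adj a x ∧ x ≠ b := by
      by_cases h : y1 = b
      · exact ⟨y2, hy2, by rintro rfl; exact hyne h⟩
      · exact ⟨y1, hy1, h⟩
    obtain ⟨z1, z2, hz1, hz2, hzne⟩ := nonleaf_two hT.isConnected hn hlb
    obtain ⟨y, hy, hya⟩ : ∃ y, T.Adj b y ∧ y ≠ a := by
      by_cases h : z1 = a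
      · exact ⟨z2, hz2, by rintro rfl; exact hzne h⟩
      · exact ⟨z1, hz1, h⟩
    have hxy : x ≠ y := by
      rintro rfl
      exact tree_triangle_free hT hab hx (hy.symm)
    right
    refine ⟨x, a, b, y, hx.symm, hab, hy, ?_⟩
    have hp : (SimpleGraph.Walk.cons hx.symm (SimpleGraph.Walk.cons hab
        (SimpleGraph.Walk.cons hy SimpleGraph.Walk.nil))).IsPath := by
      rw [SimpleGraph.Walk.isPath_def]
      simp [hx.ne', hxb, hxy, hab.ne, (Ne.symm hya), hy.ne]
    have := tree_path_length hT _ hp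
    simpa using this.symm
  · push_neg at hP
    left
    have hne : Nonempty V := Fintype.card_pos_iff.mp (by omega)
    have hleafex : ∃ x, IsLeafVert T x := by
      by_contra h
      push_neg at h
      obtain ⟨a, ha⟩ := exists_neighbor hT.isConnected (by omega) (Classical.arbitrary V)
      exact (h _) (hP _ _ ha (h _))
    obtain ⟨x, hx⟩ := hleafex
    obtain ⟨c, hc⟩ := exists_neighbor hT.isConnected (by omega) x
    have hcnl : ¬ IsLeafVert T c := fun h => leaf_not_adj_leaf hT hn hx h hc
    refine ⟨c, fun v hv => ?_⟩
    obtain ⟨p, hp, -⟩ := hT.isConnected.exists_path_of_dist c v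
    cases p with
    | nil => exact absurd rfl hv.symm
    | cons h1 q =>
      cases q with
      | nil => exact h1
      | cons h2 r =>
        rw [SimpleGraph.Walk.isPath_def] at hp
        simp only [SimpleGraph.Walk.support_cons, List.nodup_cons] at hp
        have hnl : ¬ IsLeafVert T _ := two_nbrs_nonleaf h1.symm h2
          (by rintro rfl; exact hp.1 (by simp [r.start_mem_support]))
        exact absurd (hP _ _ h1 hcnl) hnl

end TreeLeaf

section Good
open MycielskianAux
variable {V : Type*} [Fintype V] {T : SimpleGraph V} {S : Set (Option (V ⊕ V))}

lemma good_exists (hT : T.IsTree) (hn : 3 ≤ Fintype.card V)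
    (hS : IsGPSet (Mycielskian T) S) {a : V} (ha : (ô a) ∈ S)
    (hnl : ¬ IsLeafVert T a) (hnoA : ∀ v, (ô v) ∈ S → ¬ T.Adj a v) :
    ∃ y, T.Adj a y ∧ (t̂ y) ∉ S ∧ ∀ x, (ô x) ∈ S → T.Adj x y → x = a := by
  classical
  have hbad : ∀ y1 y2, y1 ≠ y2 → T.Adj a y1 → T.Adj a y2 →
      ((t̂ y1) ∈ S ∨ ∃ x, (ô x) ∈ S ∧ x ≠ a ∧ T.Adj x y1) →
      ((t̂ y2) ∈ S ∨ ∃ x, (ô x) ∈ S ∧ x ≠ a ∧ T.Adj x y2) → False := by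
    intro y1 y2 hyne hy1 hy2 hb1 hb2
    rcases hb1 with hB1 | ⟨x1, hx1S, hx1ne, hx1adj⟩
    · rcases hb2 with hB2 | ⟨x2, hx2S, hx2ne, hx2adj⟩
      · exact gpC1 hS hyne ha hB1 hB2 hy1 hy2
      · -- y1 ∈ B, x2 partner via y2 : path x2-y2-a-y1
        have hnadj : ¬ T.Adj a x2 := hnoA x2 hx2S
        have hx2y1 : x2 ≠ y1 := by rintro rfl; exact hnadj hy1
        have hx2y2 : x2 ≠ y2 := hx2adj.ne
        have hp : (SimpleGraph.Walk.cons hx2adj (SimpleGraph.Walk.cons hy2.symm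
            (SimpleGraph.Walk.cons hy1 SimpleGraph.Walk.nil))).IsPath := by
          rw [SimpleGraph.Walk.isPath_def]
          simp [hx2y2, hx2ne, hx2y1, hy2.ne', Ne.symm hyne, hy1.ne]
        have hd : T.dist x2 y1 = 3 := by
          have := tree_path_length hT _ hp; simpa using this.symm
        exact gpC10 hS hx2S hB1 hd hx2adj hy2.symm hy1 (Or.inr ha)
    · rcases hb2 with hB2 | ⟨x2, hx2S, hx2ne, hx2adj⟩
      · -- x1 partner via y1, y2 ∈ B : path x1-y1-a-y2
        have hnadj : ¬ T.Adj a x1 := hnoA x1 hx1S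
        have hx1y2 : x1 ≠ y2 := by rintro rfl; exact hnadj hy2
        have hp : (SimpleGraph.Walk.cons hx1adj (SimpleGraph.Walk.cons hy1.symm
            (SimpleGraph.Walk.cons hy2 SimpleGraph.Walk.nil))).IsPath := by
          rw [SimpleGraph.Walk.isPath_def]
          simp [hx1adj.ne, hx1ne, hx1y2, hy1.ne', hyne, hy2.ne]
        have hd : T.dist x1 y2 = 3 := by
          have := tree_path_length hT _ hp; simpa using this.symm
        exact gpC10 hS hx1S hB2 hd hx1adj hy1.symm hy2 (Or.inr ha)
      · -- both partners
        by_cases hx12 : x1 = x2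
        · subst hx12
          exact tree_square_free hT hx1ne hyne hx1adj hy1.symm hx2adj hy2.symm
        · have hx1y2 : x1 ≠ y2 := by rintro rfl; exact hnoA _ hx1S hy2
          have hx2y1 : x2 ≠ y1 := by rintro rfl; exact hnoA _ hx2S hy1
          have hp : (SimpleGraph.Walk.cons hx1adj (SimpleGraph.Walk.cons hy1.symm
              (SimpleGraph.Walk.cons hy2 (SimpleGraph.Walk.cons hx2adj.symm
                SimpleGraph.Walk.nil)))).IsPath := by
            rw [SimpleGraph.Walk.isPath_def]
            simp [hx1adj.ne, hx1ne, hx1y2, hx12, hy1.ne', hyne, Ne.symm hx2y1,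
              hy2.ne, Ne.symm hx2ne, hx2adj.ne']
          have hd : T.dist x1 x2 = 4 := by
            have := tree_path_length hT _ hp; simpa using this.symm
          exact gpC8 hS hx1S hx2S hd hx1adj hy1.symm hy2 hx2adj.symm ha
  obtain ⟨y1, y2, hy1, hy2, hyne⟩ := nonleaf_two hT.isConnected hn hnl
  by_cases hb1 : (t̂ y1) ∈ S ∨ ∃ x, (ô x) ∈ S ∧ x ≠ a ∧ T.Adj x y1
  · by_cases hb2 : (t̂ y2) ∈ S ∨ ∃ x, (ô x) ∈ S ∧ x ≠ a ∧ T.Adj x y2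
    · exact absurd (hbad y1 y2 hyne hy1 hy2 hb1 hb2) not_false
    · push_neg at hb2
      refine ⟨y2, hy2, hb2.1, fun x hx hadj => ?_⟩
      by_contra hne
      exact hb2.2 x hx hne hadj
  · push_neg at hb1
    refine ⟨y1, hy1, hb1.1, fun x hx hadj => ?_⟩
    by_contra hne
    exact hb1.2 x hx hne hadj

end Good

section Main
open MycielskianAux
variable {V : Type*} [Fintype V]

lemma main_bound {T : SimpleGraph V} (hT : T.IsTree) (hn : 3 ≤ Fintype.card V)
    {S : Set (Option (V ⊕ V))} (hS : IsGPSet (Mycielskian T) S) :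
    S.ncard + {v | IsNTVert T v}.ncard ≤ Fintype.card V + {v | IsLeafVert T v}.ncard := by
  classical
  set L : Set V := {v | IsLeafVert T v} with hLdef
  set W : Set V := {v | IsNTVert T v} with hWdef
  set A : Set V := {v | (ô v) ∈ S} with hAdef
  set B : Set V := {v | (t̂ v) ∈ S} with hBdef
  -- choice of a leaf for each NT vertex
  set ch : V → V := fun s => if h : IsNTVert T s then h.choose else s with hchdef
  have hch : ∀ s ∈ W, T.Adj s (ch s) ∧ IsLeafVert T (ch s) := by
    intro s hs
    have : ch s = (hs : IsNTVert T s).choose := dif_pos hs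
    rw [this]
    exact (hs : IsNTVert T s).choose_spec
  have hWinj : Set.InjOn ch W := by
    intro s1 h1 s2 h2 heq
    have c1 := hch s1 h1
    have c2 := hch s2 h2
    exact leaf_eq c1.2 c1.1.symm (heq ▸ c2.1.symm)
  have hchW : ch '' W ⊆ L := by
    rintro x ⟨s, hs, rfl⟩
    exact (hch s hs).2
  have hwl : W.ncard ≤ L.ncard := by
    rw [← Set.ncard_image_of_injOn hWinj]
    exact Set.ncard_le_ncard hchW (Set.toFinite _)
  have hELW : (L \ ch '' W).ncard + W.ncard = L.ncard := by
    rw [← Set.ncard_image_of_injOn hWinj]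
    exact Set.ncard_diff_add_ncard_of_subset hchW (Set.toFinite _)
  -- neighbor function
  have hnbE : ∀ x : V, ∃ y, T.Adj x y := fun x =>
    exists_neighbor hT.isConnected (by omega) x
  set nb : V → V := fun x => (hnbE x).choose with hnbdef
  have hnb : ∀ x, T.Adj x (nb x) := fun x => (hnbE x).choose_spec
  have hnbleaf : ∀ x, IsLeafVert T x → ∀ y, T.Adj x y → y = nb x :=
    fun x hx y hy => leaf_eq hx hy (hnb x)
  -- cardinality of A, B
  have hAn : A.ncard ≤ Fintype.card V := by
    have := Set.ncard_le_ncard (Set.subset_univ A) (Set.toFinite _)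
    rwa [Set.ncard_univ, Nat.card_eq_fintype_card] at this
  have hBn : B.ncard ≤ Fintype.card V := by
    have := Set.ncard_le_ncard (Set.subset_univ B) (Set.toFinite _)
    rwa [Set.ncard_univ, Nat.card_eq_fintype_card] at this
  -- decomposition of S
  have hinjo : Function.Injective (fun v : V => (some (Sum.inl v) : Option (V ⊕ V))) := by
    intro a b h; simpa using h
  have hinjt : Function.Injective (fun v : V => (some (Sum.inr v) : Option (V ⊕ V))) := by
    intro a b h; simpa using h
  have hdec : S.ncard ≤ A.ncard + B.ncard + (if none ∈ S then 1 else 0) := by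
    have hsub : S ⊆ ((fun v : V => (some (Sum.inl v) : Option (V ⊕ V))) '' A) ∪ ((fun v : V => (some (Sum.inr v) : Option (V ⊕ V))) '' B) ∪
        (if none ∈ S then {none} else ∅) := by
      intro x hx
      match x with
      | none => simp [hx]
      | some (Sum.inl v) => exact Or.inl (Or.inl ⟨v, hx, rfl⟩)
      | some (Sum.inr v) => exact Or.inl (Or.inr ⟨v, hx, rfl⟩)
    calc S.ncard ≤ _ := Set.ncard_le_ncard hsub (Set.toFinite _)
      _ ≤ (((fun v : V => (some (Sum.inl v) : Option (V ⊕ V))) '' A) ∪ ((fun v : V => (some (Sum.inr v) : Option (V ⊕ V))) '' B)).ncard +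
          (if none ∈ S then ({none} : Set (Option (V ⊕ V))) else ∅).ncard :=
        Set.ncard_union_le _ _
      _ ≤ A.ncard + B.ncard + (if none ∈ S then 1 else 0) := by
        gcongr
        · calc _ ≤ ((fun v : V => (some (Sum.inl v) : Option (V ⊕ V))) '' A).ncard + ((fun v : V => (some (Sum.inr v) : Option (V ⊕ V))) '' B).ncard :=
              Set.ncard_union_le _ _
            _ = A.ncard + B.ncard := by
              rw [Set.ncard_image_of_injective _ hinjo, Set.ncard_image_of_injective _ hinjt]
        · split <;> simp
  by_cases hz : none ∈ S
  · -- root in S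
    rw [if_pos hz] at hdec
    have hB1 : B.ncard ≤ 1 := by
      rcases B.eq_empty_or_nonempty with h | ⟨b, hb⟩
      · simp [h]
      · have : B ⊆ {b} := by
          intro b' hb'
          by_contra hne
          exact gpZ1 hS (by simpa using hne) hz hb' hb
        simpa using Set.ncard_le_ncard this (Set.toFinite _)
    by_cases hlw : W.ncard + 2 ≤ L.ncard
    · omega
    · rcases tree_star_or_path hT hn with ⟨c, hc⟩ | ⟨x0, x1, x2, x3, h01, h12, h23, hd3⟩
      · obtain ⟨hLc, hWc⟩ := star_counts hT hn hc
        rw [← hLdef] at hLc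
        rw [← hWdef] at hWc
        -- some vertex not in A
        obtain ⟨a, ha1, -⟩ := exists_third hn c c
        obtain ⟨b, hb1, hb2⟩ := exists_third hn c a
        have hmiss : ∃ t, t ∉ A := by
          by_cases haA : a ∈ A
          · by_cases hbA : b ∈ A
            · refine ⟨c, fun hcA => ?_⟩
              exact gpC2a hT hS (Ne.symm hb2) haA hbA hcA (hc a ha1).symm (hc b hb1)
            · exact ⟨b, hbA⟩
          · exact ⟨a, haA⟩
        obtain ⟨t, ht⟩ := hmiss
        have hA1 : A.ncard ≤ Fintype.card V - 1 := by
          have hsub : A ⊆ Set.univ \ {t} := fun x hx => ⟨trivial, by rintro rfl; exact ht hx⟩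
          have := Set.ncard_le_ncard hsub (Set.toFinite _)
          rwa [Set.ncard_diff (by simp) (Set.toFinite _), Set.ncard_univ,
            Nat.card_eq_fintype_card, Set.ncard_singleton] at this
        omega
      · -- path of length 3 exists
        have d03 : x0 ≠ x3 := by
          rintro rfl; rw [SimpleGraph.dist_self] at hd3; omega
        have d02 : x0 ≠ x2 := by
          rintro rfl
          rw [SimpleGraph.dist_eq_one_iff_adj.mpr h23] at hd3; omega
        have d13 : x1 ≠ x3 := by
          rintro rfl
          rw [SimpleGraph.dist_eq_one_iff_adj.mpr h01] at hd3; omega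
        have h012 : ¬(x0 ∈ A ∧ x1 ∈ A ∧ x2 ∈ A) := by
          rintro ⟨a0, a1, a2⟩
          exact gpC2a hT hS d02 a0 a2 a1 h01 h12
        have h123 : ¬(x1 ∈ A ∧ x2 ∈ A ∧ x3 ∈ A) := by
          rintro ⟨a1, a2, a3⟩
          exact gpC2a hT hS d13 a1 a3 a2 h12 h23
        have h013 : ¬(x0 ∈ A ∧ x1 ∈ A ∧ x3 ∈ A) := by
          rintro ⟨a0, a1, a3⟩
          exact gpC7a hS a0 a3 hd3 h01 h12 h23 (Or.inl a1)
        have h023 : ¬(x0 ∈ A ∧ x2 ∈ A ∧ x3 ∈ A) := by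
          rintro ⟨a0, a2, a3⟩
          exact gpC7a hS a0 a3 hd3 h01 h12 h23 (Or.inr a2)
        have hmiss : ∃ t1 t2 : V, t1 ≠ t2 ∧ t1 ∉ A ∧ t2 ∉ A := by
          by_cases m0 : x0 ∈ A <;> by_cases m1 : x1 ∈ A <;>
            by_cases m2 : x2 ∈ A <;> by_cases m3 : x3 ∈ A
          · exact absurd ⟨m0, m1, m2⟩ h012
          · exact absurd ⟨m0, m1, m2⟩ h012
          · exact absurd ⟨m0, m1, m3⟩ h013
          · exact ⟨x2, x3, h23.ne, m2, m3⟩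
          · exact absurd ⟨m0, m2, m3⟩ h023
          · exact ⟨x1, x3, d13, m1, m3⟩
          · exact ⟨x1, x2, h12.ne, m1, m2⟩
          · exact ⟨x1, x2, h12.ne, m1, m2⟩
          · exact absurd ⟨m1, m2, m3⟩ h123
          · exact ⟨x0, x3, d03, m0, m3⟩
          · exact ⟨x0, x2, d02, m0, m2⟩
          · exact ⟨x0, x2, d02, m0, m2⟩
          · exact ⟨x0, x1, h01.ne, m0, m1⟩
          · exact ⟨x0, x1, h01.ne, m0, m1⟩
          · exact ⟨x0, x1, h01.ne, m0, m1⟩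
          · exact ⟨x0, x1, h01.ne, m0, m1⟩
        obtain ⟨t1, t2, ht12, ht1, ht2⟩ := hmiss
        have hA2 : A.ncard ≤ Fintype.card V - 2 := by
          have hsub : A ⊆ Set.univ \ {t1, t2} := fun x hx =>
            ⟨trivial, by rintro (rfl | rfl) <;> [exact ht1 hx; exact ht2 hx]⟩
          have := Set.ncard_le_ncard hsub (Set.toFinite _)
          rwa [Set.ncard_diff (by simp) (Set.toFinite _), Set.ncard_univ,
            Nat.card_eq_fintype_card, Set.ncard_pair ht12] at this
        omega
  · -- root not in S
    rw [if_neg hz] at hdec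
    by_cases hP : ∃ x s, IsLeafVert T x ∧ x ∈ A ∧ T.Adj x s ∧ s ∈ B
    · obtain ⟨x, s, hxleaf, hxA, hxs, hsB⟩ := hP
      have hsA : s ∉ A := fun h => gpC4 hS h hsB hxA hxs.symm
      have hAx : A ⊆ {x} := by
        intro a ha
        simp only [Set.mem_singleton_iff]
        by_contra hne
        have hd0 : T.dist x a ≠ 0 := by
          rw [SimpleGraph.dist_ne_zero_iff_ne_and_reachable]
          exact ⟨Ne.symm hne, hT.isConnected x a⟩
        rcases Nat.lt_or_ge (T.dist x a) 4 with h4 | h4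
        · interval_cases hd : (T.dist x a)
          · omega
          · have : T.Adj x a := SimpleGraph.dist_eq_one_iff_adj.mp hd
            have := hnbleaf x hxleaf a this
            have hs' := hnbleaf x hxleaf s hxs
            rw [← hs'] at this
            exact hsA (this ▸ ha)
          · obtain ⟨m, hm1, hm2⟩ := dist2_chain hd
            have := hnbleaf x hxleaf m hm1
            have hs' := hnbleaf x hxleaf s hxs
            rw [← hs'] at this
            subst this
            exact gpC2b hT hS (Ne.symm hne) hxA ha hsB hxs hm2
          · obtain ⟨m, q, hm1, hmq, hqa⟩ := dist3_chain hd
            have := hnbleaf x hxleaf m hm1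
            have hs' := hnbleaf x hxleaf s hxs
            rw [← hs'] at this
            subst this
            exact gpC7b hS hxA ha hd hxs hmq hqa hsB
        · exact gpC6 hS hxA ha h4 hxs hsB (hnb a)
      have hBsub : B ⊆ insert s (T.neighborSet s) := by
        intro v hv
        have hd2 : T.dist x v ≤ 2 := by
          by_contra h
          exact gpC5 hS hxA hv (by omega) hxs hsB
        rcases Nat.lt_or_ge (T.dist x v) 1 with h1 | h1
        · have h0 : T.dist x v = 0 := by omega
          rw [SimpleGraph.dist_eq_zero_iff_eq_or_not_reachable] at h0
          rcases h0 with rfl | h0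
          · exact Set.mem_insert_iff.mpr (Or.inr hxs.symm)
          · exact absurd (hT.isConnected x v) h0
        · interval_cases hd : (T.dist x v)
          · have : T.Adj x v := SimpleGraph.dist_eq_one_iff_adj.mp hd
            have := hnbleaf x hxleaf v this
            have hs' := hnbleaf x hxleaf s hxs
            rw [← hs'] at this
            exact Set.mem_insert_iff.mpr (Or.inl this)
          · obtain ⟨m, hm1, hm2⟩ := dist2_chain hd
            have := hnbleaf x hxleaf m hm1
            have hs' := hnbleaf x hxleaf s hxs
            rw [← hs'] at this
            subst this
            exact Set.mem_insert_iff.mpr (Or.inr hm2)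
      have hA1 : A.ncard ≤ 1 := by
        simpa using Set.ncard_le_ncard hAx (Set.toFinite _)
      have hBd : B.ncard ≤ (T.neighborSet s).ncard + 1 := by
        calc B.ncard ≤ (insert s (T.neighborSet s)).ncard :=
              Set.ncard_le_ncard hBsub (Set.toFinite _)
          _ ≤ _ := Set.ncard_insert_le _ _
      by_cases hdeg : (T.neighborSet s).ncard + 2 ≤ Fintype.card V
      · omega
      · -- star with center s
        have hsub : T.neighborSet s ⊆ Set.univ \ {s} := fun y hy =>
          ⟨trivial, by rintro rfl; exact T.irrefl hy⟩
        have hcard : (Set.univ \ {s} : Set V).ncard = Fintype.card V - 1 := by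
          rw [Set.ncard_diff (by simp) (Set.toFinite _), Set.ncard_univ,
            Nat.card_eq_fintype_card, Set.ncard_singleton]
        have heq : T.neighborSet s = Set.univ \ {s} := by
          apply Set.eq_of_subset_of_ncard_le hsub _ (Set.toFinite _)
          omega
        have hstar : ∀ v, v ≠ s → T.Adj s v := by
          intro v hv
          have : v ∈ T.neighborSet s := by
            rw [heq]; exact ⟨trivial, by simpa using hv⟩
          exact this
        obtain ⟨hLc, hWc⟩ := star_counts hT hn hstar
        rw [← hLdef] at hLc
        rw [← hWdef] at hWc
        have hdeg1 : (T.neighborSet s).ncard = Fintype.card V - 1 := by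
          rw [heq, hcard]
        omega
    · -- the injection case
      push_neg at hP
      set EL : Set V := L \ ch '' W with hELdef
      set Φ : V → V ⊕ V := fun a =>
        if IsLeafVert T a then (if ch (nb a) = a then Sum.inl (nb a) else Sum.inr a)
        else if h : ∃ v, v ∈ A ∧ T.Adj a v then Sum.inl h.choose
        else if h : ∃ y, T.Adj a y ∧ y ∉ B ∧ ∀ x ∈ A, T.Adj x y → x = a then Sum.inl h.choose
        else Sum.inl a with hΦdef
      -- specification
      have hspec : ∀ a ∈ A,
          (IsLeafVert T a ∧ ((Φ a = Sum.inl (nb a) ∧ ch (nb a) = a) ∨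
            (Φ a = Sum.inr a ∧ ch (nb a) ≠ a))) ∨
          (¬ IsLeafVert T a ∧ ∃ v, Φ a = Sum.inl v ∧ v ∈ A ∧ T.Adj a v) ∨
          (¬ IsLeafVert T a ∧ ∃ y, Φ a = Sum.inl y ∧ T.Adj a y ∧ y ∉ B ∧
            ∀ x ∈ A, T.Adj x y → x = a) := by
        intro a ha
        by_cases hl : IsLeafVert T a
        · left
          refine ⟨hl, ?_⟩
          by_cases hcna : ch (nb a) = a
          · exact Or.inl ⟨by simp [hΦdef, hl, hcna], hcna⟩
          · exact Or.inr ⟨by simp [hΦdef, hl, hcna], hcna⟩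
        · right
          by_cases hE : ∃ v, v ∈ A ∧ T.Adj a v
          · left
            exact ⟨hl, hE.choose, by simp [hΦdef, hl, hE], hE.choose_spec.1, hE.choose_spec.2⟩
          · right
            have hG : ∃ y, T.Adj a y ∧ y ∉ B ∧ ∀ x ∈ A, T.Adj x y → x = a := by
              have hnoA : ∀ v, (ô v) ∈ S → ¬ T.Adj a v := by
                intro v hv hadj
                exact hE ⟨v, hv, hadj⟩
              obtain ⟨y, hy1, hy2, hy3⟩ := good_exists hT hn hS ha hl hnoA
              exact ⟨y, hy1, hy2, fun x hx hadj => hy3 x hx hadj⟩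
            refine ⟨hl, hG.choose, by simp [hΦdef, hl, hE, hG], hG.choose_spec.1,
              hG.choose_spec.2.1, hG.choose_spec.2.2⟩
      -- image is in inl '' Bᶜ ∪ inr '' EL
      have himg : ∀ a ∈ A, Φ a ∈ (Sum.inl '' Bᶜ) ∪ (Sum.inr '' EL) := by
        intro a ha
        rcases hspec a ha with ⟨hl, hca | hca⟩ | ⟨hl, v, hv, hvA, hvadj⟩ | ⟨hl, y, hy, hyadj, hyB, -⟩
        · left
          refine ⟨nb a, ?_, hca.1.symm⟩
          exact hP a (nb a) hl ha (hnb a)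
        · right
          refine ⟨a, ⟨hl, ?_⟩, hca.1.symm⟩
          rintro ⟨s', hs', heq⟩
          have hadj : T.Adj a s' := by
            have h' := (hch s' hs').1
            rw [heq] at h'
            exact h'.symm
          have hs'nb : s' = nb a := hnbleaf a hl s' hadj
          rw [hs'nb] at heq
          exact hca.2 heq
        · left
          refine ⟨v, ?_, hv.symm⟩
          intro hvB
          exact gpC4 hS hvA hvB ha hvadj.symm
        · left
          exact ⟨y, hyB, hy.symm⟩
      -- injectivity on A
      have hinj : Set.InjOn Φ A := by
        intro a1 h1 a2 h2 heq
        rcases hspec a1 h1 with ⟨hl1, hc1 | hc1⟩ | ⟨hl1, v1, hv1, hv1A, hv1adj⟩ |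
            ⟨hl1, y1, hy1, hy1adj, hy1B, hy1priv⟩ <;>
          rcases hspec a2 h2 with ⟨hl2, hc2 | hc2⟩ | ⟨hl2, v2, hv2, hv2A, hv2adj⟩ |
            ⟨hl2, y2, hy2, hy2adj, hy2B, hy2priv⟩
        · -- leaf-inl / leaf-inl
          rw [hc1.1, hc2.1] at heq
          simp only [Sum.inl.injEq] at heq
          rw [← hc1.2, ← hc2.2, heq]
        · rw [hc1.1, hc2.1] at heq; simp at heq
        · -- leaf-inl / edge
          rw [hc1.1, hv2] at heq
          simp only [Sum.inl.injEq] at heq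
          rw [← heq] at hv2A hv2adj
          by_contra hne
          exact gpC2a hT hS hne h1 h2 hv2A (hnb a1) hv2adj.symm
        · -- leaf-inl / good
          rw [hc1.1, hy2] at heq
          simp only [Sum.inl.injEq] at heq
          have hadj := hnb a1
          rw [heq] at hadj
          exact hy2priv a1 h1 hadj
        · rw [hc1.1, hc2.1] at heq; simp at heq
        · -- leaf-inr / leaf-inr
          rw [hc1.1, hc2.1] at heq
          simpa using heq
        · rw [hc1.1, hv2] at heq; simp at heq
        · rw [hc1.1, hy2] at heq; simp at heq
        · -- edge / leaf-inl
          rw [hv1, hc2.1] at heq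
          simp only [Sum.inl.injEq] at heq
          rw [heq] at hv1A hv1adj
          by_contra hne
          exact gpC2a hT hS hne h1 h2 hv1A hv1adj (hnb a2).symm
        · rw [hv1, hc2.1] at heq; simp at heq
        · -- edge / edge
          rw [hv1, hv2] at heq
          simp only [Sum.inl.injEq] at heq
          rw [← heq] at hv2adj
          by_contra hne
          exact gpC2a hT hS hne h1 h2 hv1A hv1adj hv2adj.symm
        · -- edge / good
          rw [hv1, hy2] at heq
          simp only [Sum.inl.injEq] at heq
          rw [heq] at hv1adj
          exact hy2priv a1 h1 hv1adj
        · -- good / leaf-inl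
          rw [hy1, hc2.1] at heq
          simp only [Sum.inl.injEq] at heq
          have hadj := hnb a2
          rw [← heq] at hadj
          exact (hy1priv a2 h2 hadj).symm
        · rw [hy1, hc2.1] at heq; simp at heq
        · -- good / edge
          rw [hy1, hv2] at heq
          simp only [Sum.inl.injEq] at heq
          rw [← heq] at hv2adj
          exact (hy1priv a2 h2 hv2adj).symm
        · -- good / good
          rw [hy1, hy2] at heq
          simp only [Sum.inl.injEq] at heq
          rw [heq] at hy1adj
          exact hy2priv a1 h1 hy1adj
      -- counting
      have hcount : A.ncard ≤ Bᶜ.ncard + EL.ncard := by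
        calc A.ncard = (Φ '' A).ncard := (Set.ncard_image_of_injOn hinj).symm
          _ ≤ ((Sum.inl '' Bᶜ) ∪ (Sum.inr '' EL) : Set (V ⊕ V)).ncard :=
            Set.ncard_le_ncard (by rintro x ⟨a, ha, rfl⟩; exact himg a ha) (Set.toFinite _)
          _ ≤ (Sum.inl '' Bᶜ : Set (V ⊕ V)).ncard + (Sum.inr '' EL : Set (V ⊕ V)).ncard :=
            Set.ncard_union_le _ _
          _ = Bᶜ.ncard + EL.ncard := by
            rw [Set.ncard_image_of_injective _ Sum.inl_injective,
              Set.ncard_image_of_injective _ Sum.inr_injective]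
      have hBc : B.ncard + Bᶜ.ncard = Fintype.card V := by
        rw [Set.ncard_add_ncard_compl, Nat.card_eq_fintype_card]
      omega
end Main

/-- If `T` is a tree of order `n ≥ 3` with `ℓ` leaves and `w` NT
vertices, then `gp(μ(T)) ≤ n + ℓ - w`. -/
theorem gpNumber_mycielskian_tree_upper_bound [Fintype V] (T : SimpleGraph V)
    (hT : T.IsTree) (hn : 3 ≤ Fintype.card V) :
    gpNumber (Mycielskian T) ≤
      Fintype.card V + {v | IsLeafVert T v}.ncard - {v | IsNTVert T v}.ncard := by
  classical
  apply csSup_le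
  · exact ⟨0, ∅, fun u hu => absurd hu (Set.notMem_empty u), by simp⟩
  · rintro k ⟨S, hS, rfl⟩
    have h := main_bound hT hn hS
    omega
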